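/- Consider the Cartan datum of type F_4 on index set {1,2,3,4}: the 4×4 Cartan matrix C = (c_{i,j}) with c_{i,i} = 2, c_{1,2} = c_{2,1} = −1, c_{2,3} = −1, c_{3,2} = −2, c_{3,4} = c_{4,3} = −1, and all other entries 0, with symmetrizer D = diag(2,2,1,1). Then B(t) = C(t)·D^{−1} is invertible over ℚ(t), and for all 1 ≤ i ≤ j ≤ 4 and all integers 0 ≤ u ≤ 11, the coefficient of t^u in the Laurent expansion at t = 0 of the (i,j)-entry of B(t)^{−1} equals the coefficient of t^u in the following polynomial p_{i,j}: p_{1,1} = 2(t + t^5 + t^7 + t^{11}); p_{1,2} = 2(t^2 + t^4 + 2t^6 + t^8 + t^{10}); p_{1,3} = 2(t^3 + t^5 + t^7 + t^9); p_{1,4} = 2(t^4 + t^8); p_{2,2} = 2(t + 2t^3 + 3t^5 + 3t^7 + 2t^9 + t^{11}); p_{2,3} = 2(t^2 + 2t^4 + 2t^6 + 2t^8 + t^{10}); p_{2,4} = 2(t^3 + t^5 + t^7 + t^9); p_{3,3} = t + 2t^3 + 3t^5 + 3t^7 + 2t^9 + t^{11}; p_{3,4} = t^2 + t^4 + 2t^6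 + t^8 + t^{10}; p_{4,4} = t + t^5 + t^7 + t^{11}. -/

import Mathlib

open Polynomial
set_option maxHeartbeats 1600000
set_option synthInstance.maxHeartbeats 200000

noncomputable section

private instance : CharZero (RatFunc ℚ) :=
  charZero_of_injective_algebraMap (algebraMap ℚ (RatFunc ℚ)).injective


/-- The `t`-quantized Cartan matrix associated to an integer Cartan matrix `c`:
diagonal entries are `t + t⁻¹` and off-diagonal entries are the entries of `c`. -/
def tCartan {n : ℕ} (c : Matrix (Fin n) (Fin n) ℤ) :
    Matrix (Fin n) (Fin n) (RatFunc ℚ) := fun i j =>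
  if i = j then RatFunc.X + RatFunc.X⁻¹ else (c i j : RatFunc ℚ)

/-- The Cartan matrix of type `F₄`. -/
def cartanF4 : Matrix (Fin 4) (Fin 4) ℤ :=
  !![2, -1, 0, 0;
     -1, 2, -1, 0;
     0, -2, 2, -1;
     0, 0, -1, 2]

/-- The symmetrizer of type `F₄`: `D = diag(2,2,1,1)`. -/
def dF4 : Fin 4 → ℕ := ![2, 2, 1, 1]

/-- The polynomials `p_{i,j}` of the statement (entries with `i ≤ j`; the matrix is
filled in symmetrically). -/
def pF4 : Matrix (Fin 4) (Fin 4) (Polynomial ℚ) :=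
  !![2*(X + X^5 + X^7 + X^11), 2*(X^2 + X^4 + 2*X^6 + X^8 + X^10),
       2*(X^3 + X^5 + X^7 + X^9), 2*(X^4 + X^8);
     2*(X^2 + X^4 + 2*X^6 + X^8 + X^10), 2*(X + 2*X^3 + 3*X^5 + 3*X^7 + 2*X^9 + X^11),
       2*(X^2 + 2*X^4 + 2*X^6 + 2*X^8 + X^10), 2*(X^3 + X^5 + X^7 + X^9);
     2*(X^3 + X^5 + X^7 + X^9), 2*(X^2 + 2*X^4 + 2*X^6 + 2*X^8 + X^10),
       X + 2*X^3 + 3*X^5 + 3*X^7 + 2*X^9 + X^11, X^2 + X^4 + 2*X^6 + X^8 + X^10;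
     2*(X^4 + X^8), 2*(X^3 + X^5 + X^7 + X^9),
       X^2 + X^4 + 2*X^6 + X^8 + X^10, X + X^5 + X^7 + X^11]

/-- `2·X` times the matrix `B` of the theorem, as a polynomial matrix. -/
private def nbF4 : Matrix (Fin 4) (Fin 4) (Polynomial ℚ) :=
  !![X^2+1, -X, 0, 0;
     -X, X^2+1, -2*X, 0;
     0, -2*X, 2*X^2+2, -2*X;
     0, 0, -2*X, 2*X^2+2]

private lemma nb_mul_p : nbF4 * pF4 = (((2*X) * (1 + X^12) : ℚ[X])) • (1 : Matrix (Fin 4) (Fin 4) ℚ[X]) := by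
  apply Matrix.ext
  intro i j
  fin_cases i <;> fin_cases j <;>
    · simp [nbF4, pF4, Matrix.mul_apply, Fin.sum_univ_four, Matrix.one_apply,
        Matrix.smul_apply, smul_eq_mul]
      ring_nf

private lemma coeffAux (q : ℚ[X]) (f : RatFunc ℚ)
    (hf : f * algebraMap ℚ[X] (RatFunc ℚ) (1 + X ^ 12) = algebraMap ℚ[X] (RatFunc ℚ) q)
    (u : ℕ) (hu : u ≤ 11) :
    (f : LaurentSeries ℚ).coeff (u : ℤ) = q.coeff u := by
  have hdPS : ((1 + X ^ 12 : ℚ[X]) : PowerSeries ℚ) = 1 + PowerSeries.X ^ 12 := by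
    push_cast
    ring
  have hconst : PowerSeries.constantCoeff ((1 + X ^ 12 : ℚ[X]) : PowerSeries ℚ)
      = ((1 : ℚˣ) : ℚ) := by
    rw [hdPS]
    simp
  set e : PowerSeries ℚ := PowerSeries.invOfUnit ((1 + X ^ 12 : ℚ[X]) : PowerSeries ℚ) 1 with hedef
  have hde : ((1 + X ^ 12 : ℚ[X]) : PowerSeries ℚ) * e = 1 :=
    PowerSeries.mul_invOfUnit _ _ hconst
  have hdL : ((((1 + X ^ 12 : ℚ[X]) : PowerSeries ℚ)) : LaurentSeries ℚ)
      * ((e : PowerSeries ℚ) : LaurentSeries ℚ) = 1 := by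
    rw [← PowerSeries.coe_mul, hde, PowerSeries.coe_one]
  have hdne : ((((1 + X ^ 12 : ℚ[X]) : PowerSeries ℚ)) : LaurentSeries ℚ) ≠ 0 :=
    left_ne_zero_of_mul_eq_one hdL
  have key : (f : LaurentSeries ℚ)
      = ((((q : PowerSeries ℚ) * e) : PowerSeries ℚ) : LaurentSeries ℚ) := by
    apply mul_right_cancel₀ hdne
    have h1 : (f : LaurentSeries ℚ) * ((((1 + X ^ 12 : ℚ[X]) : PowerSeries ℚ)) : LaurentSeries ℚ)
        = (((q : PowerSeries ℚ)) : LaurentSeries ℚ) := by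
      rw [RatFunc.coe_coe, RatFunc.coe_coe, ← map_mul]
      exact congrArg _ hf
    rw [h1, PowerSeries.coe_mul, mul_assoc, ← PowerSeries.coe_mul, mul_comm e, hde,
      PowerSeries.coe_one, mul_one]
  rw [key, LaurentSeries.coeff_coe_powerSeries]
  have he2 : (q : PowerSeries ℚ) * e
      = (q : PowerSeries ℚ) - PowerSeries.X ^ 12 * ((q : PowerSeries ℚ) * e) := by
    have h3 : e = 1 - PowerSeries.X ^ 12 * e := by
      have h4 := hde
      rw [hdPS] at h4
      linear_combination h4
    nth_rewrite 1 [h3]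
    ring
  rw [he2, map_sub, PowerSeries.coeff_X_pow_mul', if_neg (by omega)]
  simp [Polynomial.coeff_coe]

theorem stmt2
    (B : Matrix (Fin 4) (Fin 4) (RatFunc ℚ))
    (hB : B = tCartan cartanF4 *
      Matrix.diagonal (fun i => ((dF4 i : RatFunc ℚ))⁻¹)) :
    IsUnit B.det ∧
    ∀ i j : Fin 4, i ≤ j → ∀ u : ℕ, u ≤ 11 →
      ((B⁻¹ i j : RatFunc ℚ) : LaurentSeries ℚ).coeff (u : ℤ) = (pF4 i j).coeff u := by
  set φ := algebraMap ℚ[X] (RatFunc ℚ) with hφ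
  have h12poly : (1 + X ^ 12 : ℚ[X]) ≠ 0 := by
    intro h
    have h0 := congrArg (fun p => Polynomial.coeff p 0) h
    simp at h0
  set d : RatFunc ℚ := φ (1 + X ^ 12) with hd
  have hdne : d ≠ 0 := RatFunc.algebraMap_ne_zero h12poly
  have hX : (RatFunc.X : RatFunc ℚ) ≠ 0 := RatFunc.X_ne_zero
  set M : Matrix (Fin 4) (Fin 4) (RatFunc ℚ) :=
    Matrix.of (fun i j => φ (pF4 i j) * d⁻¹) with hM
  -- scaled versions are polynomial matrices
  have hBs : ((2 * RatFunc.X : RatFunc ℚ)) • B = nbF4.map φ := by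
    rw [hB]
    ext i j
    fin_cases i <;> fin_cases j <;>
      simp [hφ, tCartan, cartanF4, dF4, nbF4, Matrix.mul_diagonal, Matrix.map_apply,
        Matrix.smul_apply, smul_eq_mul, map_add, map_mul, map_pow, map_one, map_neg,
        map_ofNat, RatFunc.algebraMap_X, Matrix.vecHead, Matrix.vecTail, Function.comp] <;>
      field_simp <;> ring
  have hMs : d • M = pF4.map φ := by
    ext i j
    simp only [hM, Matrix.smul_apply, Matrix.of_apply, Matrix.map_apply, smul_eq_mul]
    rw [mul_comm (φ (pF4 i j)), ← mul_assoc, mul_inv_cancel₀ hdne, one_mul]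
  have hmapmul : nbF4.map φ * pF4.map φ = ((2 * RatFunc.X) * d) • (1 : Matrix (Fin 4) (Fin 4) (RatFunc ℚ)) := by
    have := congrArg (fun (A : Matrix (Fin 4) (Fin 4) ℚ[X]) => A.map φ) nb_mul_p
    rw [Matrix.map_mul] at this
    rw [this]
    ext i j
    simp [hφ, hd, Matrix.map_apply, Matrix.smul_apply, Matrix.one_apply, smul_eq_mul,
      apply_ite (algebraMap ℚ[X] (RatFunc ℚ)), map_mul, map_add, map_one, map_pow, map_ofNat,
      RatFunc.algebraMap_X, mul_ite]
  have hBM : B * M = 1 := by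
    have hc : (2 * RatFunc.X) * d ≠ 0 := mul_ne_zero (mul_ne_zero two_ne_zero hX) hdne
    have h1 : ((2 * RatFunc.X : RatFunc ℚ) • B) * (d • M) = (((2 * RatFunc.X) * d : RatFunc ℚ)) • (B * M) := by
      rw [Matrix.smul_mul, Matrix.mul_smul, smul_smul]
    rw [hBs, hMs, hmapmul] at h1
    have h2 : ((2 * RatFunc.X) * d) • (1 : Matrix (Fin 4) (Fin 4) (RatFunc ℚ))
        = ((2 * RatFunc.X) * d) • (B * M) := h1
    apply Matrix.ext
    intro i j
    have h3 := congrFun (congrFun h2 i) j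
    simp only [Matrix.smul_apply, smul_eq_mul] at h3
    exact (mul_left_cancel₀ hc h3).symm
  refine ⟨Matrix.isUnit_det_of_right_inverse hBM, ?_⟩
  intro i j hij u hu
  rw [Matrix.inv_eq_right_inv hBM]
  apply coeffAux _ _ _ u hu
  show (φ (pF4 i j) * d⁻¹) * φ (1 + X ^ 12) = φ (pF4 i j)
  rw [← hd, mul_assoc, inv_mul_cancel₀ hdne, mul_one]
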